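/- arXiv:1801.05381 — 2 statements merged into one kernel-verified Lean document; each statement's English description precedes it below -/
import Mathlib

section
/- For all d ≥ 1 the determinant of the square integer matrix B_d of size 2^{d−1} is odd: det(B_d) ≡ 1 (mod 2). -/
/-!
`B_d` is in fact unimodular. Ordering the rows of `B_{d+1}` as (top half, bottom half) and its
columns as (even, odd) makes it block lower triangular, `[[B_d, 0], [B_d A_d⁰, B_d A_d¹]]`, where
`A_d⁰` and `A_d¹` are the even and odd columns of `A_d`. Since `A_{d+1}` is a perfect shuffle of
`A_d`, namely `A_{d+1}(2t+b, 2j+c)` is `A_d(t, j)` for `b = c` and `δ_{j, 2t+b}` otherwise, ordering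
the rows and columns of `A_{d+1}¹` by parity gives `[[1, 0], [A_d⁰, A_d¹]]`. Hence `det A_d¹ = 1`
and `|det B_{d+1}| = |det B_d|²`.
-/

/-- `Afun m i j` is the `(i,j)` entry (0-indexed) of the matrix `A_{m+1}`,
so `A_n = Afun (n-1)`.  `A_1 = (1 1)` and, recursively, `A_n` consists of the
two block rows `(A_{n-1} | E | 0)` and `(0 | E | A_{n-1})`, where the identity
blocks `E` have size `2^(n-2)`. -/
def Afun : ℕ → ℕ → ℕ → ℤ
  | 0, i, j => if i = 0 ∧ (j = 0 ∨ j = 1) then 1 else 0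
  | m + 1, i, j =>
    if i < 2 ^ m then
      if j < 2 ^ (m + 1) then Afun m i j
      else if j < 2 ^ (m + 1) + 2 ^ m then (if j = i + 2 ^ (m + 1) then 1 else 0)
      else 0
    else
      if j < 2 ^ m then 0
      else if j < 2 ^ (m + 1) then (if j = i then 1 else 0)
      else Afun m (i - 2 ^ m) (j - 2 ^ (m + 1))

/-- `Bfun m i j` is the `(i,j)` entry (0-indexed) of the square matrix
`B_{m+1}` of size `2^m`, so `B_d = Bfun (d-1)`.  `B_1 = (1)` and `B_d` is the
vertical block concatenation of `B_{d-1} (ℰ_{d-1}^{(1)})ᵗ` (on top) and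
`B_{d-1} A_{d-1}` (on the bottom): entrywise, since `(ℰ^{(1)})_{ij} = δ_{i,2j}`
(0-indexed), `(B_{d-1} (ℰ_{d-1}^{(1)})ᵗ)_{ij} = B_{d-1,(i,j/2)}` for even `j`
and `0` for odd `j`, while `(B_{d-1} A_{d-1})_{ij} = ∑_k B_{d-1,(i,k)} A_{d-1,(k,j)}`. -/
def Bfun : ℕ → ℕ → ℕ → ℤ
  | 0, i, j => if i = 0 ∧ j = 0 then 1 else 0
  | m + 1, i, j =>
    if i < 2 ^ m then
      (if j % 2 = 0 then Bfun m i (j / 2) else 0)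
    else
      ∑ k : Fin (2 ^ m), Bfun m (i - 2 ^ m) (k : ℕ) * Afun m (k : ℕ) j

/-- The square integer matrix `B_d` of size `2^(d-1)` (for `d ≥ 1`). -/
def Bmat (d : ℕ) : Matrix (Fin (2 ^ (d - 1))) (Fin (2 ^ (d - 1))) ℤ :=
  Matrix.of fun i j => Bfun (d - 1) (i : ℕ) (j : ℕ)

lemma Afun_succ_top_left {m i j : ℕ} (hi : i < 2 ^ m) (hj : j < 2 ^ (m + 1)) :
    Afun (m + 1) i j = Afun m i j := by
  rw [Afun, if_pos hi, if_pos hj]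

lemma Afun_succ_top_mid {m i j : ℕ} (hi : i < 2 ^ m) (hj₁ : 2 ^ (m + 1) ≤ j)
    (hj₂ : j < 2 ^ (m + 1) + 2 ^ m) :
    Afun (m + 1) i j = if j = i + 2 ^ (m + 1) then 1 else 0 := by
  rw [Afun, if_pos hi, if_neg (by omega), if_pos hj₂]

lemma Afun_succ_top_right {m i j : ℕ} (hi : i < 2 ^ m) (hj : 2 ^ (m + 1) + 2 ^ m ≤ j) :
    Afun (m + 1) i j = 0 := by
  rw [Afun, if_pos hi, if_neg (by omega), if_neg (by omega)]

lemma Afun_succ_bottom_left {m i j : ℕ} (hi : 2 ^ m ≤ i) (hj : j < 2 ^ m) :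
    Afun (m + 1) i j = 0 := by
  rw [Afun, if_neg (by omega), if_pos hj]

lemma Afun_succ_bottom_mid {m i j : ℕ} (hi : 2 ^ m ≤ i) (hj₁ : 2 ^ m ≤ j)
    (hj₂ : j < 2 ^ (m + 1)) :
    Afun (m + 1) i j = if j = i then 1 else 0 := by
  rw [Afun, if_neg (by omega), if_neg (by omega), if_pos hj₂]

lemma Afun_succ_bottom_right {m i j : ℕ} (hi : 2 ^ m ≤ i) (hj : 2 ^ (m + 1) ≤ j) :
    Afun (m + 1) i j = Afun m (i - 2 ^ m) (j - 2 ^ (m + 1)) := by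
  have := pow_succ 2 m
  rw [Afun, if_neg (by omega), if_neg (by omega), if_neg (by omega)]

lemma Afun_succ_interleave {b c : ℕ} (hb : b < 2) (hc : c < 2) :
    ∀ {m t j : ℕ}, t < 2 ^ m → j < 2 ^ (m + 1) →
      Afun (m + 1) (2 * t + b) (2 * j + c) =
        if b = c then Afun m t j else if j = 2 * t + b then 1 else 0 := by
  intro m
  induction m with
  | zero =>
    intro t j ht hj
    interval_cases b <;> interval_cases c <;> interval_cases t <;> interval_cases j <;> rfl
  | succ m ih =>
    intro t j ht hj
    have := pow_succ 2 m
    have : 2 ^ (m + 2) = 2 ^ (m + 1) * 2 := pow_succ 2 (m + 1)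
    rcases lt_or_ge t (2 ^ m) with ht' | ht'
    · rcases lt_or_ge j (2 ^ (m + 1)) with hj₁ | hj₁
      · rw [Afun_succ_top_left (by omega) (by omega), ih ht' hj₁, Afun_succ_top_left ht' hj₁]
      rcases lt_or_ge j (2 ^ (m + 1) + 2 ^ m) with hj₂ | hj₂
      · rw [Afun_succ_top_mid (by omega) (by omega) (by omega), Afun_succ_top_mid ht' hj₁ hj₂]
        split_ifs <;> omega
      · rw [Afun_succ_top_right (by omega) (by omega), Afun_succ_top_right ht' hj₂]
        split_ifs <;> omega
    · rcases lt_or_ge j (2 ^ m) with hj₁ | hj₁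
      · rw [Afun_succ_bottom_left (by omega) (by omega), Afun_succ_bottom_left ht' hj₁]
        split_ifs <;> omega
      rcases lt_or_ge j (2 ^ (m + 1)) with hj₂ | hj₂
      · rw [Afun_succ_bottom_mid (by omega) (by omega) (by omega),
          Afun_succ_bottom_mid ht' hj₁ hj₂]
        split_ifs <;> omega
      · rw [Afun_succ_bottom_right (by omega) (by omega), Afun_succ_bottom_right ht' hj₂,
          show 2 * t + b - 2 ^ (m + 1) = 2 * (t - 2 ^ m) + b by omega,
          show 2 * j + c - 2 ^ (m + 2) = 2 * (j - 2 ^ (m + 1)) + c by omega,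
          ih (by omega) (by omega)]
        split_ifs <;> omega

lemma Bfun_succ_of_lt {m i : ℕ} (hi : i < 2 ^ m) (j : ℕ) :
    Bfun (m + 1) i j = if j % 2 = 0 then Bfun m i (j / 2) else 0 := by
  rw [Bfun, if_pos hi]

lemma Bfun_succ_two_pow_add (m i j : ℕ) :
    Bfun (m + 1) (2 ^ m + i) j = ∑ k : Fin (2 ^ m), Bfun m i k * Afun m k j := by
  rw [Bfun, if_neg (by omega), Nat.add_sub_cancel_left]

noncomputable def finSumFinEquivEvenOdd (n : ℕ) : Fin n ⊕ Fin n ≃ Fin (2 * n) :=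
  Equiv.ofBijective (Sum.elim (fun t => ⟨2 * t, by omega⟩) fun t => ⟨2 * t + 1, by omega⟩) <|
    (Fintype.bijective_iff_injective_and_card _).mpr
      ⟨by rintro (s | s) (t | t) h <;> simp [Fin.ext_iff] at h ⊢ <;> omega, by simp; ring⟩

@[simp] lemma finSumFinEquivEvenOdd_inl {n : ℕ} (t : Fin n) :
    (finSumFinEquivEvenOdd n (.inl t) : ℕ) = 2 * t := rfl

@[simp] lemma finSumFinEquivEvenOdd_inr {n : ℕ} (t : Fin n) :
    (finSumFinEquivEvenOdd n (.inr t) : ℕ) = 2 * t + 1 := rfl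

def dyadicHalves (m : ℕ) : Fin (2 ^ m) ⊕ Fin (2 ^ m) ≃ Fin (2 ^ (m + 1)) :=
  finSumFinEquiv.trans (finCongr (by ring))

noncomputable def dyadicParities (m : ℕ) : Fin (2 ^ m) ⊕ Fin (2 ^ m) ≃ Fin (2 ^ (m + 1)) :=
  (finSumFinEquivEvenOdd _).trans (finCongr (by ring))

@[simp] lemma dyadicHalves_inl {m : ℕ} (t : Fin (2 ^ m)) : (dyadicHalves m (.inl t) : ℕ) = t :=
  rfl

@[simp] lemma dyadicHalves_inr {m : ℕ} (t : Fin (2 ^ m)) :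
    (dyadicHalves m (.inr t) : ℕ) = 2 ^ m + t := rfl

@[simp] lemma dyadicParities_inl {m : ℕ} (t : Fin (2 ^ m)) :
    (dyadicParities m (.inl t) : ℕ) = 2 * t := rfl

@[simp] lemma dyadicParities_inr {m : ℕ} (t : Fin (2 ^ m)) :
    (dyadicParities m (.inr t) : ℕ) = 2 * t + 1 := rfl

def Bsq (m : ℕ) : Matrix (Fin (2 ^ m)) (Fin (2 ^ m)) ℤ := Matrix.of fun i j => Bfun m i j

def Aeven (m : ℕ) : Matrix (Fin (2 ^ m)) (Fin (2 ^ m)) ℤ := Matrix.of fun i j => Afun m i (2 * j)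

def Aodd (m : ℕ) : Matrix (Fin (2 ^ m)) (Fin (2 ^ m)) ℤ :=
  Matrix.of fun i j => Afun m i (2 * j + 1)

lemma Aodd_succ_submatrix (m : ℕ) :
    (Aodd (m + 1)).submatrix (dyadicParities m) (dyadicParities m) =
      Matrix.fromBlocks 1 0 (Aeven m) (Aodd m) := by
  ext (t | t) (u | u) <;>
    simp only [Matrix.submatrix_apply, Aodd, Aeven, Matrix.of_apply, Matrix.fromBlocks_apply₁₁,
      Matrix.fromBlocks_apply₁₂, Matrix.fromBlocks_apply₂₁, Matrix.fromBlocks_apply₂₂,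
      dyadicParities_inl, dyadicParities_inr]
  · have h := Afun_succ_interleave (b := 0) (c := 1) (by omega) (by omega) t.isLt
      (j := 2 * u) (by omega)
    rw [add_zero] at h
    rw [h, Matrix.one_apply]
    simp [Fin.ext_iff, eq_comm]
  · have h := Afun_succ_interleave (b := 0) (c := 1) (by omega) (by omega) t.isLt
      (j := 2 * u + 1) (by omega)
    rw [add_zero] at h
    rw [h, if_neg (by omega), if_neg (by omega), Matrix.zero_apply]
  · exact Afun_succ_interleave (by omega) (by omega) t.isLt (by omega)
  · exact Afun_succ_interleave (by omega) (by omega) t.isLt (by omega)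

lemma det_Aodd (m : ℕ) : (Aodd m).det = 1 := by
  induction m with
  | zero => exact Matrix.det_fin_one (Aodd 0)
  | succ m ih =>
    rw [← Matrix.det_submatrix_equiv_self (dyadicParities m), Aodd_succ_submatrix,
      Matrix.det_fromBlocks_zero₁₂, Matrix.det_one, one_mul, ih]

lemma Bsq_succ_submatrix (m : ℕ) :
    (Bsq (m + 1)).submatrix (dyadicHalves m) (dyadicParities m) =
      Matrix.fromBlocks (Bsq m) 0 (Bsq m * Aeven m) (Bsq m * Aodd m) := by
  ext (i | i) (j | j) <;>
    simp only [Matrix.submatrix_apply, Bsq, Aodd, Aeven, Matrix.of_apply, Matrix.fromBlocks_apply₁₁,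
      Matrix.fromBlocks_apply₁₂, Matrix.fromBlocks_apply₂₁, Matrix.fromBlocks_apply₂₂,
      dyadicHalves_inl, dyadicHalves_inr, dyadicParities_inl, dyadicParities_inr, Matrix.mul_apply]
  · rw [Bfun_succ_of_lt i.isLt, if_pos (by omega), Nat.mul_div_cancel_left _ two_pos]
  · rw [Bfun_succ_of_lt i.isLt, if_neg (by omega), Matrix.zero_apply]
  · exact Bfun_succ_two_pow_add m i (2 * j)
  · exact Bfun_succ_two_pow_add m i (2 * j + 1)

lemma abs_det_Bsq (m : ℕ) : |(Bsq m).det| = 1 := by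
  induction m with
  | zero => simp [Bsq, Bfun]
  | succ m ih =>
    rw [← Matrix.abs_det_submatrix_equiv_equiv (dyadicHalves m) (dyadicParities m),
      Bsq_succ_submatrix, Matrix.det_fromBlocks_zero₁₂, Matrix.det_mul, det_Aodd, abs_mul, abs_mul,
      ih, abs_one, mul_one, mul_one]

theorem statement4_general (d : ℕ) :
    Int.ModEq 2 (Matrix.det (Bmat d)) 1 := by
  have hdet : |(Bmat d).det| = 1 := abs_det_Bsq (d - 1)
  rcases abs_eq_abs.mp (hdet.trans abs_one.symm) with h | h <;> simp [h, Int.ModEq]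

/-- For all `d ≥ 1` the determinant of the square integer
matrix `B_d` of size `2^(d-1)` is odd: `det(B_d) ≡ 1 (mod 2)`. -/
theorem statement4 (d : ℕ) (hd : 1 ≤ d) :
    Int.ModEq 2 (Matrix.det (Bmat d)) 1 :=
  statement4_general d
end

section
/- For all d ≥ 2 one has the matrix congruences A_{d−1} ℰ_{d−1}^{(2)} ≡ T_d A_{d−1}^{(1)} T_d (mod 2) and A_{d−1} ℰ_{d−1}^{(1)} ≡ T_d A_{d−1}^{(2)} T_d (mod 2), where all matrices are square of size 2^{d−2}. -/
/- Words in the letters x, y are modelled as lists of Booleans, where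
`false` plays the role of the letter x and `true` of the letter y.
All matrices are given by their (0-indexed) entry functions on ℕ, and matrix
products are written out as the corresponding sums over the inner index. -/

/-- The `n`-th (0-indexed) monomial of degree `d` in xℌy, in lexicographic
order with x < y; the vector `w_d` consists of the words
`wordList d 0, …, wordList d (2^(d-2)-1)`. -/
def wordList (d n : ℕ) : List Bool :=
  (false :: (List.range (d - 2)).map fun k => Nat.testBit n (d - 3 - k)) ++ [true]

/-- The anti-automorphism τ of ℌ (with τ(x) = y, τ(y) = x) on words:
reverse the word and swap the two letters. -/
def tauWord (l : List Bool) : List Bool := l.reverse.map (fun b => !b)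

/-- Entries of the permutation matrix `T_d` of size `2^(d-2)` determined by
`T_d w_d = τ(w_d)` (τ applied entrywise): its `(i,j)` entry is `1` exactly
when the `j`-th monomial of degree `d` is τ of the `i`-th one. -/
def Tfun (d i j : ℕ) : ℤ :=
  if wordList d j = tauWord (wordList d i) then 1 else 0

/-- Entries of the `2^d × 2^(d-1)` matrix `ℰ_d^{(1)}`: `δ_{i,2j}` (0-indexed). -/
def E1fun (i j : ℕ) : ℤ := if i = 2 * j then 1 else 0

/-- Entries of the `2^d × 2^(d-1)` matrix `ℰ_d^{(2)}`: `δ_{i,2j+1}` (0-indexed). -/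
def E2fun (i j : ℕ) : ℤ := if i = 2 * j + 1 then 1 else 0

/-! Write the row index `i` of `A_{m+1}` as a binary word of length `m` and the column index `j`
as one of length `m + 1` (most significant bit first, `x = false`, `y = true`). The block
recursion of `A_{m+1}` then says that its `(i, j)` entry is `1` exactly when the word of `i` is
obtained from that of `j` by deleting one letter. Conjugating by `T_{m+2}` relabels rows and
columns by `τ` (reverse and swap letters) on the inner words, and `τ` preserves subwords.
Column `2j + 1` (resp. `2j`) of `A_{m+1}` has word `w ++ [y]` (resp. `w ++ [x]`), and
`τ (w ++ [b]) = ¬b :: τ w` is a column of the left (resp. right) half. So the congruences hold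
even as equalities. -/

open scoped List

theorem List.cons_sublist_cons_iff_of_ne {α : Type*} {a b : α} {l l' : List α} (h : a ≠ b) :
    a :: l <+ b :: l' ↔ a :: l <+ l' := by
  simp [List.sublist_cons_iff, h]

theorem lt_two_pow_or_eq_two_pow_add {m n : ℕ} (hn : n < 2 ^ (m + 1)) :
    n < 2 ^ m ∨ ∃ n' < 2 ^ m, n = 2 ^ m + n' := by
  rcases lt_or_ge n (2 ^ m) with h | h
  · exact .inl h
  · exact .inr ⟨n - 2 ^ m, by rw [pow_succ] at hn; omega, by omega⟩

def binaryWord (m n : ℕ) : List Bool :=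
  (List.range m).map fun k => n.testBit (m - 1 - k)

theorem binaryWord_length (m n : ℕ) : (binaryWord m n).length = m := by
  simp [binaryWord]

theorem eq_of_binaryWord_eq {m a b : ℕ} (ha : a < 2 ^ m) (hb : b < 2 ^ m)
    (h : binaryWord m a = binaryWord m b) : a = b := by
  refine Nat.eq_of_testBit_eq fun k => ?_
  rcases lt_or_ge k m with hk | hk
  · have := congrArg (·[m - 1 - k]?) h
    simpa [binaryWord, List.getElem?_map, List.getElem?_range, show m - 1 - k < m by omega,
      show m - 1 - (m - 1 - k) = k by omega] using this
  · rw [Nat.testBit_lt_two_pow (ha.trans_le (Nat.pow_le_pow_right two_pos hk)),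
      Nat.testBit_lt_two_pow (hb.trans_le (Nat.pow_le_pow_right two_pos hk))]

theorem binaryWord_succ_of_lt {m n : ℕ} (hn : n < 2 ^ m) :
    binaryWord (m + 1) n = false :: binaryWord m n := by
  simp only [binaryWord, List.range_succ_eq_map, List.map_cons, List.map_map]
  refine congrArg₂ _ (by simpa using Nat.testBit_lt_two_pow hn) (List.map_congr_left ?_)
  intro k hk
  simp only [Function.comp_apply]
  congr 1
  have := List.mem_range.mp hk
  omega

theorem binaryWord_succ_two_pow_add {m n : ℕ} (hn : n < 2 ^ m) :
    binaryWord (m + 1) (2 ^ m + n) = true :: binaryWord m n := by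
  simp only [binaryWord, List.range_succ_eq_map, List.map_cons, List.map_map]
  refine congrArg₂ _ (by simp [Nat.testBit_two_pow_add_eq, Nat.testBit_lt_two_pow hn])
    (List.map_congr_left ?_)
  intro k hk
  have := List.mem_range.mp hk
  simp only [Function.comp_apply, show m + 1 - 1 - (k + 1) = m - 1 - k by omega]
  exact Nat.testBit_two_pow_add_gt (by omega) n

theorem binaryWord_succ_bit (m n : ℕ) (b : Bool) :
    binaryWord (m + 1) (Nat.bit b n) = binaryWord m n ++ [b] := by
  simp only [binaryWord, List.range_succ, List.map_append, List.map_cons, List.map_nil,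
    Nat.add_sub_cancel, Nat.sub_self, Nat.testBit_bit_zero]
  refine congrArg (· ++ [b]) (List.map_congr_left fun k hk => ?_)
  have := List.mem_range.mp hk
  rw [show m - k = (m - 1 - k) + 1 by omega, Nat.testBit_bit_succ]

theorem tauWord_involutive : Function.Involutive tauWord := fun l => by
  simp [tauWord, List.map_reverse, Function.comp_def]

theorem tauWord_append_singleton (l : List Bool) (b : Bool) :
    tauWord (l ++ [b]) = (!b) :: tauWord l := by
  simp [tauWord]

theorem tauWord_cons (b : Bool) (l : List Bool) :
    tauWord (b :: l) = tauWord l ++ [!b] := by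
  simp [tauWord]

theorem tauWord_sublist_tauWord_iff {l₁ l₂ : List Bool} :
    tauWord l₁ <+ tauWord l₂ ↔ l₁ <+ l₂ := by
  have mono : ∀ {l l' : List Bool}, l <+ l' → tauWord l <+ tauWord l' :=
    fun h => h.reverse.map _
  exact ⟨fun h => by simpa only [tauWord_involutive _] using mono h, mono⟩

def revCompl (m i : ℕ) : ℕ := (~~~(BitVec.ofNat m i).reverse).toNat

theorem revCompl_lt (m i : ℕ) : revCompl m i < 2 ^ m := BitVec.isLt _

theorem binaryWord_revCompl (m i : ℕ) :
    binaryWord m (revCompl m i) = tauWord (binaryWord m i) := by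
  refine List.ext_getElem (by simp [binaryWord, tauWord]) fun k hk _ => ?_
  have hk : k < m := by simpa [binaryWord] using hk
  simp only [binaryWord, tauWord, revCompl, List.getElem_map, List.getElem_reverse,
    List.getElem_range, List.length_map, List.length_range, BitVec.testBit_toNat,
    BitVec.getLsbD_not, BitVec.getLsbD_reverse, BitVec.getMsbD, BitVec.getLsbD_ofNat]
  simp [hk, show m - 1 - k < m by omega, show m - 1 - (m - 1 - k) = k by omega]

theorem wordList_add_two (m n : ℕ) : wordList (m + 2) n = false :: binaryWord m n ++ [true] := rfl

theorem Tfun_comm (d i j : ℕ) : Tfun d i j = Tfun d j i := by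
  unfold Tfun
  exact if_congr (eq_comm.trans tauWord_involutive.eq_iff) rfl rfl

theorem Tfun_eq_ite {m i j : ℕ} (hj : j < 2 ^ m) :
    Tfun (m + 2) i j = if j = revCompl m i then 1 else 0 := by
  have hτ : tauWord (wordList (m + 2) i) = false :: binaryWord m (revCompl m i) ++ [true] := by
    simp [wordList_add_two, tauWord_cons, tauWord_append_singleton, binaryWord_revCompl]
  rw [Tfun, hτ, wordList_add_two]
  simp only [List.cons_append, List.cons.injEq, true_and, List.append_left_inj]
  exact if_congr ⟨eq_of_binaryWord_eq hj (revCompl_lt m i), fun h => h ▸ rfl⟩ rfl rfl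

theorem binaryWord_sublist_binaryWord_iff {m a b : ℕ} (ha : a < 2 ^ m) (hb : b < 2 ^ m) :
    binaryWord m a <+ binaryWord m b ↔ a = b :=
  ⟨fun h => eq_of_binaryWord_eq ha hb (h.eq_of_length (by simp [binaryWord_length])),
    fun h => h ▸ List.Sublist.refl _⟩

theorem not_cons_binaryWord_sublist_binaryWord (c : Bool) (m a b : ℕ) :
    ¬ c :: binaryWord m a <+ binaryWord m b :=
  fun h => absurd h.length_le (by simp [binaryWord_length])

theorem Afun_eq_ite_sublist {m i j : ℕ} (hi : i < 2 ^ m) (hj : j < 2 ^ (m + 1)) :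
    Afun m i j = if binaryWord m i <+ binaryWord (m + 1) j then 1 else 0 := by
  induction m generalizing i j with
  | zero =>
    obtain rfl : i = 0 := by simpa using hi
    interval_cases j <;> simp [Afun, binaryWord]
  | succ m ih =>
    rcases lt_two_pow_or_eq_two_pow_add hi with hi | ⟨i, hi', rfl⟩ <;>
    rcases lt_two_pow_or_eq_two_pow_add hj with hj | ⟨j, hj', rfl⟩
    · rw [Afun, if_pos hi, if_pos hj, ih hi hj, binaryWord_succ_of_lt hi,
        binaryWord_succ_of_lt hj]
      simp only [List.cons_sublist_cons]
    · rw [binaryWord_succ_of_lt hi, binaryWord_succ_two_pow_add hj']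
      simp only [List.cons_sublist_cons_iff_of_ne Bool.false_ne_true]
      rcases lt_two_pow_or_eq_two_pow_add hj' with hj' | ⟨j, hj'', rfl⟩
      · rw [Afun, if_pos hi, if_neg (by omega), if_pos (by omega), binaryWord_succ_of_lt hj']
        simp only [List.cons_sublist_cons, binaryWord_sublist_binaryWord_iff hi hj']
        exact if_congr (by omega) rfl rfl
      · rw [Afun, if_pos hi, if_neg (by omega), if_neg (by omega),
          binaryWord_succ_two_pow_add hj'']
        simp [List.cons_sublist_cons_iff_of_ne Bool.false_ne_true,
          not_cons_binaryWord_sublist_binaryWord]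
    · rw [binaryWord_succ_two_pow_add hi', binaryWord_succ_of_lt hj]
      simp only [List.cons_sublist_cons_iff_of_ne Bool.false_ne_true.symm]
      rcases lt_two_pow_or_eq_two_pow_add hj with hj | ⟨j, hj', rfl⟩
      · rw [Afun, if_neg (by omega), if_pos hj, binaryWord_succ_of_lt hj]
        simp [List.cons_sublist_cons_iff_of_ne Bool.false_ne_true.symm,
          not_cons_binaryWord_sublist_binaryWord]
      · rw [Afun, if_neg (by omega), if_neg (by omega), if_pos (by omega),
          binaryWord_succ_two_pow_add hj']
        simp only [List.cons_sublist_cons, binaryWord_sublist_binaryWord_iff hi' hj']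
        exact if_congr (by omega) rfl rfl
    · rw [Afun, if_neg (by omega), if_neg (by omega), if_neg (by omega),
        binaryWord_succ_two_pow_add hi', binaryWord_succ_two_pow_add hj',
        Nat.add_sub_cancel_left, Nat.add_sub_cancel_left, ih hi' hj']
      simp only [List.cons_sublist_cons]

theorem binaryWord_two_pow_mul_add_revCompl (m j : ℕ) (b : Bool) :
    binaryWord (m + 1) (2 ^ m * (!b).toNat + revCompl m j) =
      tauWord (binaryWord (m + 1) (Nat.bit b j)) := by
  rw [binaryWord_succ_bit, tauWord_append_singleton, ← binaryWord_revCompl]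
  cases b
  · simpa using binaryWord_succ_two_pow_add (revCompl_lt m j)
  · simpa using binaryWord_succ_of_lt (revCompl_lt m j)

theorem Afun_bit_eq_Afun_revCompl {m i j : ℕ} (hi : i < 2 ^ m) (hj : j < 2 ^ m) (b : Bool) :
    Afun m i (Nat.bit b j) = Afun m (revCompl m i) (2 ^ m * (!b).toNat + revCompl m j) := by
  have hrj := revCompl_lt m j
  rw [Afun_eq_ite_sublist hi (by simpa using hj),
    Afun_eq_ite_sublist (revCompl_lt m i) (by cases b <;> simp [pow_succ] <;> omega),
    binaryWord_two_pow_mul_add_revCompl, binaryWord_revCompl]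
  simp only [tauWord_sublist_tauWord_iff]

theorem Fin.sum_ite_val_eq {R : Type*} [AddCommMonoid R] {n c : ℕ} (hc : c < n)
    (f : Fin n → R) : ∑ k : Fin n, (if (k : ℕ) = c then f k else 0) = f ⟨c, hc⟩ := by
  simpa [Fin.ext_iff] using Finset.sum_ite_eq' Finset.univ (⟨c, hc⟩ : Fin n) f

theorem sum_mul_E2fun {n j : ℕ} (hj : 2 * j + 1 < n) (f : ℕ → ℤ) :
    ∑ k : Fin n, f k * E2fun k j = f (2 * j + 1) := by
  simp only [E2fun, mul_ite, mul_one, mul_zero, Fin.sum_ite_val_eq hj]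

theorem sum_mul_E1fun {n j : ℕ} (hj : 2 * j < n) (f : ℕ → ℤ) :
    ∑ k : Fin n, f k * E1fun k j = f (2 * j) := by
  simp only [E1fun, mul_ite, mul_one, mul_zero, Fin.sum_ite_val_eq hj]

theorem sum_Tfun_mul_mul_Tfun {m : ℕ} (i j : Fin (2 ^ m)) (g : ℕ → ℕ → ℤ) :
    ∑ k : Fin (2 ^ m), ∑ l : Fin (2 ^ m), Tfun (m + 2) i k * g k l * Tfun (m + 2) l j
      = g (revCompl m i) (revCompl m j) := by
  simp only [Tfun_comm (m + 2) _ j, Tfun_eq_ite (Fin.isLt _), ite_mul, mul_ite, one_mul,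
    mul_one, zero_mul, mul_zero, Fin.sum_ite_val_eq (revCompl_lt m j),
    Fin.sum_ite_val_eq (revCompl_lt m i)]

theorem sum_Afun_mul_E2fun_eq (m : ℕ) (i j : Fin (2 ^ m)) :
    ∑ k : Fin (2 ^ (m + 1)), Afun m i k * E2fun k j =
      ∑ k : Fin (2 ^ m), ∑ l : Fin (2 ^ m),
        Tfun (m + 2) i k * Afun m k l * Tfun (m + 2) l j := by
  rw [sum_mul_E2fun (by rw [pow_succ]; omega), sum_Tfun_mul_mul_Tfun]
  simpa using Afun_bit_eq_Afun_revCompl i.isLt j.isLt true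

theorem sum_Afun_mul_E1fun_eq (m : ℕ) (i j : Fin (2 ^ m)) :
    ∑ k : Fin (2 ^ (m + 1)), Afun m i k * E1fun k j =
      ∑ k : Fin (2 ^ m), ∑ l : Fin (2 ^ m),
        Tfun (m + 2) i k * Afun m k (l + 2 ^ m) * Tfun (m + 2) l j := by
  rw [sum_mul_E1fun (by rw [pow_succ]; omega),
    sum_Tfun_mul_mul_Tfun i j fun k l => Afun m k (l + 2 ^ m)]
  simpa [add_comm] using Afun_bit_eq_Afun_revCompl i.isLt j.isLt false

/-- For all `d ≥ 2` one has the entrywise matrix congruences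
`A_{d-1} ℰ_{d-1}^{(2)} ≡ T_d A_{d-1}^{(1)} T_d (mod 2)` and
`A_{d-1} ℰ_{d-1}^{(1)} ≡ T_d A_{d-1}^{(2)} T_d (mod 2)`, where all matrices
are square of size `2^(d-2)` and the products are written out entrywise. -/
theorem statement8 (d : ℕ) (hd : 2 ≤ d) (i j : Fin (2 ^ (d - 2))) :
    Int.ModEq 2
      (∑ k : Fin (2 ^ (d - 1)), Afun (d - 2) (i : ℕ) (k : ℕ) * E2fun (k : ℕ) (j : ℕ))
      (∑ k : Fin (2 ^ (d - 2)), ∑ l : Fin (2 ^ (d - 2)),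
        Tfun d (i : ℕ) (k : ℕ) * Afun (d - 2) (k : ℕ) (l : ℕ) * Tfun d (l : ℕ) (j : ℕ))
    ∧ Int.ModEq 2
      (∑ k : Fin (2 ^ (d - 1)), Afun (d - 2) (i : ℕ) (k : ℕ) * E1fun (k : ℕ) (j : ℕ))
      (∑ k : Fin (2 ^ (d - 2)), ∑ l : Fin (2 ^ (d - 2)),
        Tfun d (i : ℕ) (k : ℕ) * Afun (d - 2) (k : ℕ) ((l : ℕ) + 2 ^ (d - 2))
          * Tfun d (l : ℕ) (j : ℕ)) := by
  obtain ⟨m, rfl⟩ : ∃ m, d = m + 2 := ⟨d - 2, by omega⟩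
  exact ⟨congrArg (· % 2) (sum_Afun_mul_E2fun_eq m i j),
    congrArg (· % 2) (sum_Afun_mul_E1fun_eq m i j)⟩
end
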